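/- Let (A, μ, B) be a quadratic Novikov superalgebra equipped with an automorphism α satisfying B(α(x), y) = B(x, α(y)). Then (A, [·,·]_α, α, B_α) is a quadratic Hom-Lie superalgebra, where [x,y]_α = α(xy − (−1)^{|x||y|}yx) and B_α(x,y) = B(α(x), y). -/
import Mathlib


/-- The sub-adjacent super-commutator bracket `[x,y] = xy - (-1)^(|x||y|) yx`
for homogeneous `x` of degree `i` and `y` of degree `j`. -/
def sbr {𝕜 A : Type*} [Field 𝕜] [AddCommGroup A] [Module 𝕜 A]
    (mul : A →ₗ[𝕜] A →ₗ[𝕜] A) (i j : ZMod 2) (x y : A) : A :=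
  mul x y - ((-1 : 𝕜) ^ (i.val * j.val)) • mul y x

lemma negpow_congr {𝕜 : Type*} [Field 𝕜] {a b : ℕ} (h : a % 2 = b % 2) :
    ((-1 : 𝕜)) ^ a = (-1) ^ b := by
  rcases Nat.even_or_odd a with ha | ha
  · have hb : Even b := by rw [Nat.even_iff] at *; omega
    rw [ha.neg_one_pow, hb.neg_one_pow]
  · have hb : Odd b := by rw [Nat.odd_iff] at *; omega
    rw [ha.neg_one_pow, hb.neg_one_pow]

lemma negpow_add_val {𝕜 : Type*} [Field 𝕜] (i j k : ZMod 2) :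
    ((-1 : 𝕜)) ^ (i.val * (j + k).val) = (-1) ^ (i.val * j.val) * (-1) ^ (i.val * k.val) := by
  rw [← pow_add]
  refine negpow_congr ?_
  rw [ZMod.val_add j k, ← Nat.mul_add, Nat.mul_mod, Nat.mod_mod_of_dvd _ (dvd_refl 2),
    ← Nat.mul_mod]

lemma negpow_add_val' {𝕜 : Type*} [Field 𝕜] (i k j : ZMod 2) :
    ((-1 : 𝕜)) ^ ((i + k).val * j.val) = (-1) ^ (i.val * j.val) * (-1) ^ (k.val * j.val) := by
  rw [← pow_add]
  refine negpow_congr ?_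
  rw [ZMod.val_add i k, ← Nat.add_mul, Nat.mul_mod, Nat.mod_mod_of_dvd _ (dvd_refl 2),
    ← Nat.mul_mod]

lemma negpow_sq {𝕜 : Type*} [Field 𝕜] (n : ℕ) :
    ((-1 : 𝕜)) ^ n * (-1) ^ n = 1 := by
  rw [← pow_add]
  exact Even.neg_one_pow ⟨n, rfl⟩

theorem stmt7
    (𝕜 A : Type*) [Field 𝕜] [AddCommGroup A] [Module 𝕜 A]
    (G : ZMod 2 → Submodule 𝕜 A) (hG : DirectSum.IsInternal G)
    (mul : A →ₗ[𝕜] A →ₗ[𝕜] A)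
    (hmul_even : ∀ i j : ZMod 2, ∀ x ∈ G i, ∀ y ∈ G j, mul x y ∈ G (i + j))
    (hls : ∀ i j k : ZMod 2, ∀ x ∈ G i, ∀ y ∈ G j, ∀ z ∈ G k,
      mul (mul x y) z - mul x (mul y z)
        = ((-1 : 𝕜) ^ (i.val * j.val)) • (mul (mul y x) z - mul y (mul x z)))
    (hrn : ∀ i j k : ZMod 2, ∀ x ∈ G i, ∀ y ∈ G j, ∀ z ∈ G k,
      mul (mul x y) z = ((-1 : 𝕜) ^ (j.val * k.val)) • mul (mul x z) y)
    (B : A →ₗ[𝕜] A →ₗ[𝕜] 𝕜)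
    (hB_even : ∀ i j : ZMod 2, i ≠ j → ∀ x ∈ G i, ∀ y ∈ G j, B x y = 0)
    (hB_sym : ∀ i j : ZMod 2, ∀ x ∈ G i, ∀ y ∈ G j,
      B x y = ((-1 : 𝕜) ^ (i.val * j.val)) * B y x)
    (hB_nd : ∀ x : A, (∀ y : A, B x y = 0) → x = 0)
    (hB_inv : ∀ x y z : A, B (mul x y) z = B x (mul y z))
    (α : A →ₗ[𝕜] A)
    (hα_even : ∀ i : ZMod 2, ∀ x ∈ G i, α x ∈ G i)
    (hα_mul : ∀ x y : A, α (mul x y) = mul (α x) (α y))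
    (hα_bij : Function.Bijective α)
    (hBα : ∀ x y : A, B (α x) y = B x (α y)) :
    (∀ i j : ZMod 2, ∀ x ∈ G i, ∀ y ∈ G j,
      α (α (sbr mul i j x y)) = α (sbr mul i j (α x) (α y))) ∧
    (∀ i j : ZMod 2, ∀ x ∈ G i, ∀ y ∈ G j,
      α (sbr mul i j x y) = -(((-1 : 𝕜) ^ (i.val * j.val)) • α (sbr mul j i y x))) ∧
    (∀ i j k : ZMod 2, ∀ x ∈ G i, ∀ y ∈ G j, ∀ z ∈ G k,
      ((-1 : 𝕜) ^ (i.val * k.val)) • α (sbr mul i (j + k) (α x) (α (sbr mul j k y z)))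
        + ((-1 : 𝕜) ^ (i.val * j.val)) • α (sbr mul j (k + i) (α y) (α (sbr mul k i z x)))
        + ((-1 : 𝕜) ^ (j.val * k.val)) • α (sbr mul k (i + j) (α z) (α (sbr mul i j x y))) = 0) ∧
    (∀ i j : ZMod 2, ∀ x ∈ G i, ∀ y ∈ G j,
      B (α x) y = ((-1 : 𝕜) ^ (i.val * j.val)) * B (α y) x) ∧
    (∀ x : A, (∀ y : A, B (α x) y = 0) → x = 0) ∧
    (∀ i j : ZMod 2, i ≠ j → ∀ x ∈ G i, ∀ y ∈ G j, B (α x) y = 0) ∧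
    (∀ i j k : ZMod 2, ∀ x ∈ G i, ∀ y ∈ G j, ∀ z ∈ G k,
      B (α (α (sbr mul i j x y))) z = B (α x) (α (sbr mul j k y z))) ∧
    (∀ x y : A, B (α (α x)) y = B (α x) (α y)) := by
  have hαs : ∀ (i j : ZMod 2) (x y : A),
      α (sbr mul i j x y) = sbr mul i j (α x) (α y) := by
    intro i j x y
    simp only [sbr, map_sub, map_smul, hα_mul]
  refine ⟨?_, ?_, ?_, ?_, ?_, ?_, ?_, ?_⟩
  · -- α is multiplicative for the bracket
    intro i j x _ y _
    rw [hαs i j x y]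
  · -- super skew-symmetry
    intro i j x _ y _
    have hstep : sbr mul i j x y
        = -(((-1 : 𝕜) ^ (i.val * j.val)) • sbr mul j i y x) := by
      simp only [sbr]
      rw [Nat.mul_comm j.val i.val]
      have hs := negpow_sq (𝕜 := 𝕜) (i.val * j.val)
      linear_combination (norm := module) hs • (-(mul x y))
    rw [hstep, map_neg, map_smul]
  · -- super Jacobi identity
    intro i j k x hx y hy z hz
    simp only [hαs]
    simp only [sbr, map_sub, map_smul, LinearMap.sub_apply, LinearMap.smul_apply]
    rw [negpow_add_val i j k, negpow_add_val j k i, negpow_add_val k i j,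
      Nat.mul_comm j.val i.val, Nat.mul_comm k.val i.val, Nat.mul_comm k.val j.val]
    set X := α (α x) with hXdef
    set Y := α (α y) with hYdef
    set Z := α (α z) with hZdef
    have hX : X ∈ G i := hα_even i _ (hα_even i x hx)
    have hY : Y ∈ G j := hα_even j _ (hα_even j y hy)
    have hZ : Z ∈ G k := hα_even k _ (hα_even k z hz)
    have h1 := hls i j k X hX Y hY Z hZ
    have h2 := hls j k i Y hY Z hZ X hX
    have h3 := hls k i j Z hZ X hX Y hY
    rw [Nat.mul_comm k.val i.val] at h3
    generalize hA : ((-1 : 𝕜) ^ (i.val * j.val)) = a at h1 h2 h3 ⊢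
    generalize hBB : ((-1 : 𝕜) ^ (j.val * k.val)) = b at h1 h2 h3 ⊢
    generalize hC : ((-1 : 𝕜) ^ (i.val * k.val)) = c at h1 h2 h3 ⊢
    have ha : a * a = 1 := by rw [← hA]; exact negpow_sq _
    have hb : b * b = 1 := by rw [← hBB]; exact negpow_sq _
    have hc : c * c = 1 := by rw [← hC]; exact negpow_sq _
    linear_combination (norm := module) (-c) • h1 + (-a) • h2 + (-b) • h3
      + hc • ((-a) • mul (mul Y Z) X + (a * b) • mul (mul Z Y) X)
      + ha • ((-b) • mul (mul Z X) Y + (b * c) • mul (mul X Z) Y)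
      + hb • ((-c) • mul (mul X Y) Z + (a * c) • mul (mul Y X) Z)
  · -- super symmetry of Bα
    intro i j x hx y hy
    have hs := negpow_sq (𝕜 := 𝕜) (i.val * j.val)
    have h1 := hB_sym j i (α y) (hα_even j y hy) x hx
    rw [Nat.mul_comm j.val i.val, ← hBα x y] at h1
    rw [h1, ← mul_assoc, hs, one_mul]
  · -- nondegeneracy of Bα
    intro x hx
    have h0 : α x = 0 := hB_nd (α x) hx
    exact hα_bij.1 (by rw [h0, map_zero])
  · -- Bα is even
    intro i j hij x hx y hy
    exact hB_even i j hij (α x) (hα_even i x hx) y hy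
  · -- invariance of Bα
    intro i j k x hx y hy z hz
    have hX : α x ∈ G i := hα_even i x hx
    have hY : α y ∈ G j := hα_even j y hy
    have lhs_eq : B (α (α (sbr mul i j x y))) z
        = B (sbr mul i j (α x) (α y)) (α z) := by
      rw [hαs i j x y]; exact hBα _ _
    rw [lhs_eq, hαs j k y z]
    simp only [sbr, map_sub, map_smul, LinearMap.sub_apply, LinearMap.smul_apply,
      smul_eq_mul]
    have e1 := hB_inv (α x) (α y) (α z)
    have e2 := hB_inv (α y) (α x) (α z)
    have e3 := hB_inv (α x) (α z) (α y)
    have e4 := hB_sym (i + k) j (mul (α x) (α z))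
      (hmul_even i k (α x) hX (α z) (hα_even k z hz)) (α y) hY
    rw [negpow_add_val', Nat.mul_comm k.val j.val] at e4
    have hbb := negpow_sq (𝕜 := 𝕜) (j.val * k.val)
    linear_combination e1 - ((-1 : 𝕜) ^ (i.val * j.val)) * e2
      - ((-1 : 𝕜) ^ (j.val * k.val)) * e3 + ((-1 : 𝕜) ^ (j.val * k.val)) * e4
      + (((-1 : 𝕜) ^ (i.val * j.val)) * B (α y) (mul (α x) (α z))) * hbb
  · -- Bα compatibility with α
    intro x y
    exact hBα (α x) y
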